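/- arXiv:2106.04000 — 3 statements merged into one kernel-verified Lean document; each statement's English description precedes it below -/
import Mathlib

section
/- A function f : Λ → ℂ is discrete analytic if and only if for every closed path γ in Λ the discrete integral of f over γ vanishes: ∫_γ f δz = 0. -/
open Complex Finset GaussianInt

noncomputable section

/-- The lattice point `i` in the Gaussian integers. -/
def ii : GaussianInt := ⟨0, 1⟩

/-- `f` is discrete analytic on the whole lattice `Λ = ℤ + iℤ`. -/
def DAnalytic (f : GaussianInt → ℂ) : Prop :=
  ∀ z : GaussianInt,
    (f (z + 1 + ii) - f z) / (1 + Complex.I) = (f (z + 1) - f (z + ii)) / (1 - Complex.I)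

/-- `f` is discrete analytic on the right half lattice `Λ₊ = {z : Re z ≥ 0}`. -/
def DAnalyticOn (f : GaussianInt → ℂ) : Prop :=
  ∀ z : GaussianInt, 0 ≤ z.re →
    (f (z + 1 + ii) - f z) / (1 + Complex.I) = (f (z + 1) - f (z + ii)) / (1 - Complex.I)

/-- `γ 0, γ 1, …, γ n` is a path in the lattice from `a` to `b`:
consecutive points are at distance `1`. -/
def IsPath (γ : ℕ → GaussianInt) (n : ℕ) (a b : GaussianInt) : Prop :=
  γ 0 = a ∧ γ n = b ∧ ∀ k < n, ‖(γ (k + 1) : ℂ) - (γ k : ℂ)‖ = 1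

/-- The discrete integral `∫_γ f δz` along the path `γ 0, …, γ n`. -/
def discInt (f : GaussianInt → ℂ) (γ : ℕ → GaussianInt) (n : ℕ) : ℂ :=
  ∑ k ∈ Finset.range n, ((f (γ k) + f (γ (k + 1))) / 2) * ((γ (k + 1) : ℂ) - (γ k : ℂ))

/-- The canonical lattice path from `0` to `z`: first along the real axis, then vertically. -/
def cpath (z : GaussianInt) (k : ℕ) : GaussianInt :=
  ⟨z.re.sign * ((min k z.re.natAbs : ℕ) : ℤ),
   z.im.sign * ((min k (z.re.natAbs + z.im.natAbs) - z.re.natAbs : ℕ) : ℤ)⟩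

/-- The length of the canonical path from `0` to `z`. -/
def cpathLen (z : GaussianInt) : ℕ := z.re.natAbs + z.im.natAbs

/-- The operator `Z`: `Zf(z) = (f(0) - f(z))/2 + ∫_0^z f δz`, the integral being taken
along the canonical path (for discrete analytic `f` the integral is path-independent). -/
def Zop (f : GaussianInt → ℂ) : GaussianInt → ℂ := fun z =>
  (f 0 - f z) / 2 + discInt f (cpath z) (cpathLen z)

/-- The basic discrete analytic polynomials `z⁽ⁿ⁾ = Zⁿ1`. -/
def zpoly (n : ℕ) : GaussianInt → ℂ := Zop^[n] (fun _ => 1)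

/-- `α₊ = (1+i)/2`. -/
def aPlus : ℂ := (1 + Complex.I) / 2
/-- `α₋ = (1-i)/2`. -/
def aMinus : ℂ := (1 - Complex.I) / 2

/-- The difference operator `δx`. -/
def dxOp (f : GaussianInt → ℂ) : GaussianInt → ℂ := fun z => f (z + 1) - f z
/-- The difference operator `δy`. -/
def dyOp (f : GaussianInt → ℂ) : GaussianInt → ℂ := fun z => f (z + ii) - f z

/-- `f` belongs to the Hardy space `H₂(Λ₊)` with coefficient sequence `c`:
`f(z) = Σ c(n) z⁽ⁿ⁾(z)` on `Λ₊` and `Σ |c(n)|² < ∞`. -/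
def MemH2 (f : GaussianInt → ℂ) (c : ℕ → ℂ) : Prop :=
  Summable (fun n => ‖c n‖ ^ 2) ∧
  ∀ z : GaussianInt, 0 ≤ z.re → HasSum (fun n => c n * zpoly n z) (f z)


/-! If `f` is discrete analytic, summing the trapezoid terms of `f` from `0` along the real axis
and then vertically gives a discrete primitive `F`: its increment along every unit edge `[z, w]`
is `(f z + f w) / 2 * (w - z)`. Vertically this holds by construction, horizontally because the
integral around each unit square vanishes, which is the defining relation of discrete
analyticity. Integrals over paths then telescope to `F b - F a`, so they vanish on closed paths.
Conversely, the integral around the unit square at `z` is a nonzero multiple of the analyticity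
defect at `z`. -/

lemma coe_ii : ((ii : GaussianInt) : ℂ) = I := by
  simp [ii, toComplex_def']

lemma dAnalytic_iff (f : GaussianInt → ℂ) :
    DAnalytic f ↔ ∀ z : GaussianInt,
      (f (z + 1 + ii) - f z) * (1 - I) = (f (z + 1) - f (z + ii)) * (1 + I) := by
  have hp : (1 + I) ≠ 0 := by simp [Complex.ext_iff]
  have hm : (1 - I) ≠ 0 := by simp [Complex.ext_iff]
  simp only [DAnalytic, div_eq_div_iff hp hm]

lemma eq_one_or_eq_neg_one_or_eq_ii_or_eq_neg_ii {u : GaussianInt} (h : ‖(u : ℂ)‖ = 1) :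
    u = 1 ∨ u = -1 ∨ u = ii ∨ u = -ii := by
  have hsq : u.re * u.re + u.im * u.im = 1 := by
    have : Complex.normSq (u : ℂ) = 1 := by rw [← Complex.sq_norm, h, one_pow]
    rw [Complex.normSq_apply, ← GaussianInt.intCast_re, ← GaussianInt.intCast_im] at this
    exact_mod_cast this
  have : -1 ≤ u.re ∧ u.re ≤ 1 ∧ -1 ≤ u.im ∧ u.im ≤ 1 := by
    refine ⟨?_, ?_, ?_, ?_⟩ <;> nlinarith
  obtain ⟨re, im⟩ := u
  simp only [Zsqrtd.ext_iff, ii, Zsqrtd.re_one, Zsqrtd.im_one, Zsqrtd.re_neg, Zsqrtd.im_neg] at *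
  obtain ⟨h1, h2, h3, h4⟩ := this
  interval_cases re <;> interval_cases im <;> omega

section cumsum

variable {M : Type*} [AddCommGroup M]

def cumsum (h : ℤ → M) (n : ℤ) : M :=
  ∑ k ∈ Ico 0 n, h k - ∑ k ∈ Ico n 0, h k

@[simp]
lemma cumsum_zero (h : ℤ → M) : cumsum h 0 = 0 := by
  simp [cumsum]

lemma cumsum_add_one (h : ℤ → M) (n : ℤ) : cumsum h (n + 1) = cumsum h n + h n := by
  rcases le_or_gt 0 n with hn | hn
  · simp [cumsum, Ico_eq_empty_of_le, hn, (by omega : (0 : ℤ) ≤ n + 1),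
      ← sum_Ico_add_eq_sum_Ico_add_one hn]
  · rw [cumsum, cumsum, ← insert_Ico_add_one_left_eq_Ico hn, sum_insert (by simp),
      Ico_eq_empty_of_le (by omega : n + 1 ≤ 0), Ico_eq_empty_of_le hn.le]
    abel

end cumsum

def IsDiscPrimitive (f F : GaussianInt → ℂ) : Prop :=
  ∀ z w : GaussianInt, ‖(w : ℂ) - z‖ = 1 → F w - F z = (f z + f w) / 2 * (w - z)

lemma isDiscPrimitive_of_add_one_of_add_ii {f F : GaussianInt → ℂ}
    (h1 : ∀ z, F (z + 1) = F z + (f z + f (z + 1)) / 2)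
    (hi : ∀ z, F (z + ii) = F z + I * ((f z + f (z + ii)) / 2)) : IsDiscPrimitive f F := by
  intro z w hzw
  rw [← toComplex_sub] at hzw
  obtain ⟨u, rfl⟩ : ∃ u, w = z + u := ⟨w - z, by abel⟩
  rw [add_sub_cancel_left] at hzw
  rcases eq_one_or_eq_neg_one_or_eq_ii_or_eq_neg_ii hzw with rfl | rfl | rfl | rfl
  · simp [h1]
  · have h := h1 (z - 1)
    rw [sub_add_cancel] at h
    rw [← sub_eq_add_neg, h]
    simp only [map_sub, map_one]
    ring
  · simp [hi, coe_ii, mul_comm]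
  · have h := hi (z - ii)
    rw [sub_add_cancel] at h
    rw [← sub_eq_add_neg, h]
    simp only [map_sub, coe_ii]
    ring

lemma discInt_eq_sub_of_isPath {f F : GaussianInt → ℂ} (hF : IsDiscPrimitive f F)
    {γ : ℕ → GaussianInt} {n : ℕ} {a b : GaussianInt} (hγ : IsPath γ n a b) :
    discInt f γ n = F b - F a := by
  obtain ⟨rfl, rfl, hstep⟩ := hγ
  rw [discInt, ← sum_range_sub (fun k => F (γ k))]
  exact sum_congr rfl fun k hk => (hF _ _ (hstep k (mem_range.mp hk))).symm

lemma mk_add_one (x y : ℤ) : (⟨x, y⟩ : GaussianInt) + 1 = ⟨x + 1, y⟩ := by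
  ext <;> simp

lemma mk_add_ii (x y : ℤ) : (⟨x, y⟩ : GaussianInt) + ii = ⟨x, y + 1⟩ := by
  ext <;> simp [ii]

def discPrimitive (f : GaussianInt → ℂ) (z : GaussianInt) : ℂ :=
  cumsum (fun x => (f ⟨x, 0⟩ + f ⟨x + 1, 0⟩) / 2) z.re
    + cumsum (fun y => I * ((f ⟨z.re, y⟩ + f ⟨z.re, y + 1⟩) / 2)) z.im

lemma discPrimitive_mk_add_one_im (f : GaussianInt → ℂ) (x y : ℤ) :
    discPrimitive f ⟨x, y + 1⟩ =
      discPrimitive f ⟨x, y⟩ + I * ((f ⟨x, y⟩ + f ⟨x, y + 1⟩) / 2) := by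
  simp only [discPrimitive, cumsum_add_one]
  ring

lemma discPrimitive_add_ii (f : GaussianInt → ℂ) (z : GaussianInt) :
    discPrimitive f (z + ii) = discPrimitive f z + I * ((f z + f (z + ii)) / 2) := by
  obtain ⟨x, y⟩ := z
  simp only [mk_add_ii, discPrimitive_mk_add_one_im]

namespace DAnalytic

variable {f : GaussianInt → ℂ}

lemma discPrimitive_add_one (hf : DAnalytic f) (z : GaussianInt) :
    discPrimitive f (z + 1) = discPrimitive f z + (f z + f (z + 1)) / 2 := by
  obtain ⟨x, y⟩ := z
  set g : ℤ → ℂ := fun t =>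
    discPrimitive f ⟨x + 1, t⟩ - discPrimitive f ⟨x, t⟩ - (f ⟨x, t⟩ + f ⟨x + 1, t⟩) / 2
  -- moving up one row preserves `g` exactly because the unit square between the rows is closed
  have hg : Function.Periodic g 1 := fun t => by
    have hsq := (dAnalytic_iff f).mp hf ⟨x, t⟩
    simp only [mk_add_one, mk_add_ii] at hsq
    simp only [g, discPrimitive_mk_add_one_im]
    linear_combination -hsq / 2
  have hg0 : g 0 = 0 := by simp [g, discPrimitive, cumsum_add_one]
  have hy := hg.int_mul_eq y
  simp only [mul_one, hg0, g] at hy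
  rw [mk_add_one]
  linear_combination hy

lemma isDiscPrimitive_discPrimitive (hf : DAnalytic f) : IsDiscPrimitive f (discPrimitive f) :=
  isDiscPrimitive_of_add_one_of_add_ii hf.discPrimitive_add_one (discPrimitive_add_ii f)

lemma discInt_eq_zero_of_isPath (hf : DAnalytic f) {γ : ℕ → GaussianInt} {n : ℕ}
    {a : GaussianInt} (hγ : IsPath γ n a a) : discInt f γ n = 0 := by
  rw [discInt_eq_sub_of_isPath hf.isDiscPrimitive_discPrimitive hγ, sub_self]

end DAnalytic

def unitSquare (z : GaussianInt) : ℕ → GaussianInt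
  | 1 => z + 1
  | 2 => z + 1 + ii
  | 3 => z + ii
  | _ => z

lemma isPath_unitSquare (z : GaussianInt) : IsPath (unitSquare z) 4 z z := by
  refine ⟨rfl, rfl, fun k hk => ?_⟩
  interval_cases k <;> simp [unitSquare, coe_ii]

lemma discInt_unitSquare (f : GaussianInt → ℂ) (z : GaussianInt) :
    discInt f (unitSquare z) 4 =
      ((f (z + 1) - f (z + ii)) * (1 + I) - (f (z + 1 + ii) - f z) * (1 - I)) / 2 := by
  simp only [discInt, sum_range_succ, sum_range_zero, unitSquare, map_add, map_one, coe_ii]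
  ring

/-- A function `f : Λ → ℂ` is discrete analytic if and only if its discrete
integral over every closed path in `Λ` vanishes. -/
theorem stmt0 (f : GaussianInt → ℂ) :
    DAnalytic f ↔
      ∀ (γ : ℕ → GaussianInt) (n : ℕ) (a : GaussianInt),
        IsPath γ n a a → discInt f γ n = 0 := by
  refine ⟨fun hf γ n a hγ => hf.discInt_eq_zero_of_isPath hγ, fun h => ?_⟩
  rw [dAnalytic_iff]
  intro z
  have hsq := h _ _ _ (isPath_unitSquare z)
  rw [discInt_unitSquare] at hsq
  linear_combination -2 * hsq

end
end

section
/- For every z ∈ Λ and every t ∈ ℂ with |t| < 1, the series Σ_{n=0}^∞ tⁿ z^{(n)}(z) converges absolutely and its sum equals G_z(t) = (1+t)^{Re z} ((1+α₊t)/(1+α₋t))^{Im z}. -/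
open Complex Finset GaussianInt

noncomputable section

/-- The generating function `G_z(t) = (1+t)^{Re z} ((1+α₊t)/(1+α₋t))^{Im z}`. -/
def genF (z : GaussianInt) (t : ℂ) : ℂ :=
  (1 + t) ^ z.re * ((1 + aPlus * t) / (1 + aMinus * t)) ^ z.im

/-! If the canonical path to `z + d` continues the one to `z` by the unit step `d`, the
definition of `Z` gives
`z⁽ⁿ⁺¹⁾(z + d) + (1 - d)/2 · z⁽ⁿ⁾(z + d) = z⁽ⁿ⁺¹⁾(z) + (1 + d)/2 · z⁽ⁿ⁾(z)`.
Multiplied by `tⁿ⁺¹` and summed, this says that the generating series at `z + d` is the one at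
`z` times `(1 + (1 + d)t/2) / (1 + (1 - d)t/2) = G_d(t)`; since `‖(1 - d)t/2‖ < 1`, absolute
convergence passes from `z` to `z + d` as well. Starting from `z⁽ⁿ⁾(0) = δₙ₀` and walking along
the real axis, then vertically, reaches every lattice point. -/

section Recurrence

lemma summable_of_le_add_mul {x y : ℕ → ℝ} {r : ℝ} (hx : ∀ n, 0 ≤ x n) (hy0 : ∀ n, 0 ≤ y n)
    (hy : Summable y) (hr0 : 0 ≤ r) (hr : r < 1) (h : ∀ n, x (n + 1) ≤ y n + r * x n) :
    Summable x := by
  refine summable_of_sum_range_le hx (c := (x 0 + ∑' n, y n) / (1 - r)) fun N => ?_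
  rw [le_div_iff₀ (by linarith)]
  -- `S (N + 1) = x 0 + ∑_{n<N} x (n + 1) ≤ x 0 + ∑' y + r S N ≤ x 0 + ∑' y + r S (N + 1)`
  cases N with
  | zero => simpa using add_nonneg (hx 0) (tsum_nonneg hy0)
  | succ N =>
    have hle : ∑ n ∈ range N, x (n + 1) ≤ ∑ n ∈ range N, y n + r * ∑ n ∈ range N, x n := by
      rw [mul_sum, ← sum_add_distrib]
      exact sum_le_sum fun n _ => h n
    have hy_le : ∑ n ∈ range N, y n ≤ ∑' n, y n := hy.sum_le_tsum _ fun n _ => hy0 n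
    have hmono : ∑ n ∈ range N, x n ≤ ∑ n ∈ range (N + 1), x n :=
      sum_le_sum_of_subset_of_nonneg (range_subset_range.mpr N.le_succ) fun n _ _ => hx n
    rw [sum_range_succ'] at hmono ⊢
    nlinarith

variable {𝕜 : Type*} [NormedField 𝕜] {u v : ℕ → 𝕜} {p q : 𝕜}

lemma norm_mul_lt_one {a t : 𝕜} (ha : ‖a‖ ≤ 1) (ht : ‖t‖ < 1) : ‖a * t‖ < 1 := by
  rw [norm_mul]
  exact mul_lt_one_of_nonneg_of_lt_one_right ha (norm_nonneg t) ht

lemma one_add_ne_zero_of_norm_lt_one (hq : ‖q‖ < 1) : 1 + q ≠ 0 := fun h => by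
  rw [show q = -1 by linear_combination h, norm_neg, norm_one] at hq
  exact lt_irrefl _ hq

lemma summable_norm_of_recurrence (hq : ‖q‖ < 1)
    (hrec : ∀ n, v (n + 1) + q * v n = u (n + 1) + p * u n) (hu : Summable (‖u ·‖)) :
    Summable (‖v ·‖) := by
  have hu_shift : Summable fun n => ‖u (n + 1)‖ + ‖p‖ * ‖u n‖ :=
    (hu.comp_injective (add_left_injective 1)).add (hu.mul_left ‖p‖)
  refine summable_of_le_add_mul (fun n => norm_nonneg _) (fun n => by positivity) hu_shift
    (norm_nonneg q) hq fun n => ?_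
  calc ‖v (n + 1)‖ = ‖u (n + 1) + p * u n - q * v n‖ := by rw [← hrec, add_sub_cancel_right]
    _ ≤ ‖u (n + 1)‖ + ‖p‖ * ‖u n‖ + ‖q‖ * ‖v n‖ := by
      grw [norm_sub_le, norm_add_le, norm_mul, norm_mul]

lemma hasSum_of_recurrence {A : 𝕜} (hq : ‖q‖ < 1) (h0 : v 0 = u 0)
    (hrec : ∀ n, v (n + 1) + q * v n = u (n + 1) + p * u n) (hv : Summable v)
    (hu : HasSum u A) : HasSum v (A * ((1 + p) / (1 + q))) := by
  have hq1 := one_add_ne_zero_of_norm_lt_one hq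
  have shifted {w : ℕ → 𝕜} {c W : 𝕜} (hw : HasSum w W) :
      HasSum (fun n => w (n + 1) + c * w n) (W - w 0 + c * W) := by
    simpa using ((hasSum_nat_add_iff' 1).mpr hw).add (hw.mul_left c)
  have key : ∑' n, v n - v 0 + q * ∑' n, v n = A - u 0 + p * A :=
    (shifted hv.hasSum).unique (by simpa only [hrec] using shifted hu)
  convert hv.hasSum using 1
  field_simp
  linear_combination -key - h0

end Recurrence

lemma cpath_cpathLen (z : GaussianInt) : cpath z (cpathLen z) = z := by
  ext <;> simp [cpath, cpathLen, Int.sign_mul_abs]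

def IsCpathStep (z d : GaussianInt) : Prop :=
  cpathLen (z + d) = cpathLen z + 1 ∧ ∀ k ≤ cpathLen z, cpath (z + d) k = cpath z k

lemma Zop_add_of_isCpathStep (f : GaussianInt → ℂ) {z d : GaussianInt} (h : IsCpathStep z d) :
    Zop f (z + d) = Zop f z + (1 + d) / 2 * f z - (1 - d) / 2 * f (z + d) := by
  obtain ⟨hlen, hpath⟩ := h
  have hint : discInt f (cpath (z + d)) (cpathLen (z + d)) =
      discInt f (cpath z) (cpathLen z) + (f z + f (z + d)) / 2 * d := by
    rw [discInt, hlen, sum_range_succ, ← hlen, cpath_cpathLen, hpath _ le_rfl, cpath_cpathLen,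
      toComplex_add, add_sub_cancel_left, discInt]
    congr 1
    refine sum_congr rfl fun k hk => ?_
    rw [mem_range] at hk
    rw [hpath k hk.le, hpath (k + 1) hk]
  rw [Zop, Zop, hint]
  ring

lemma natAbs_add_of_natAbs_eq_one {x s : ℤ} (hs : s.natAbs = 1) (hxs : 0 ≤ x * s) :
    (x + s).natAbs = x.natAbs + 1 := by
  rcases Int.natAbs_eq_iff.mp hs with rfl | rfl <;> omega

lemma sign_mul_sub_min_add {x s : ℤ} (hs : s.natAbs = 1) (hxs : 0 ≤ x * s) {m k : ℕ}
    (hk : k ≤ m + x.natAbs) :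
    (x + s).sign * ((min k (m + (x + s).natAbs) - m : ℕ) : ℤ) =
      x.sign * ((min k (m + x.natAbs) - m : ℕ) : ℤ) := by
  have hsign : x ≠ 0 → (x + s).sign = x.sign := by
    intro hx
    rcases Int.natAbs_eq_iff.mp hs with rfl | rfl <;> rcases hx.lt_or_gt with hx | hx <;>
      first
      | rw [Int.sign_eq_one_of_pos hx, Int.sign_eq_one_of_pos (by omega)]
      | rw [Int.sign_eq_neg_one_of_neg hx, Int.sign_eq_neg_one_of_neg (by omega)]
  rw [natAbs_add_of_natAbs_eq_one hs hxs, min_eq_left (by omega), min_eq_left hk]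
  rcases Nat.eq_zero_or_pos (k - m) with h | h
  · simp [h]
  · rw [hsign (by omega)]

lemma isCpathStep_im (z : GaussianInt) {s : ℤ} (hs : s.natAbs = 1) (hzs : 0 ≤ z.im * s) :
    IsCpathStep z ⟨0, s⟩ := by
  refine ⟨by simp [cpathLen, natAbs_add_of_natAbs_eq_one hs hzs]; omega, fun k hk => ?_⟩
  ext
  · simp [cpath]
  · simpa [cpath] using sign_mul_sub_min_add hs hzs hk

lemma isCpathStep_re (z : GaussianInt) {s : ℤ} (hs : s.natAbs = 1) (hz : z.im = 0)
    (hzs : 0 ≤ z.re * s) : IsCpathStep z ⟨s, 0⟩ := by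
  refine ⟨by simp [cpathLen, natAbs_add_of_natAbs_eq_one hs hzs]; omega, fun k hk => ?_⟩
  ext
  · simpa [cpath] using sign_mul_sub_min_add (m := 0) hs hzs (by simpa [cpathLen, hz] using hk)
  · simp [cpath, hz]

lemma zpoly_succ (n : ℕ) : zpoly (n + 1) = Zop (zpoly n) :=
  Function.iterate_succ_apply' Zop n _

lemma zpoly_succ_zero (n : ℕ) : zpoly (n + 1) 0 = 0 := by
  simp [zpoly_succ, Zop, cpathLen, discInt]

lemma norm_one_add_div_two_le {d : ℂ} (hd : ‖d‖ ≤ 1) : ‖(1 + d) / 2‖ ≤ 1 := by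
  rw [norm_div, RCLike.norm_ofNat, div_le_one two_pos]
  linarith [norm_add_le 1 d, norm_one (α := ℂ)]

lemma genF_add {t : ℂ} (ht : ‖t‖ < 1) (z w : GaussianInt) :
    genF (z + w) t = genF z t * genF w t := by
  have h1 : 1 + t ≠ 0 := one_add_ne_zero_of_norm_lt_one ht
  have hP : 1 + aPlus * t ≠ 0 := one_add_ne_zero_of_norm_lt_one <|
    norm_mul_lt_one (norm_one_add_div_two_le (by simp)) ht
  have hM : 1 + aMinus * t ≠ 0 := one_add_ne_zero_of_norm_lt_one <| norm_mul_lt_one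
    (by simpa [aMinus, sub_eq_add_neg] using norm_one_add_div_two_le (d := -I) (by simp)) ht
  simp only [genF, Zsqrtd.re_add, Zsqrtd.im_add, zpow_add₀ h1, zpow_add₀ (div_ne_zero hP hM)]
  ring

def HasGenSeries (t : ℂ) (z : GaussianInt) : Prop :=
  Summable (fun n => ‖t ^ n * zpoly n z‖) ∧ HasSum (fun n => t ^ n * zpoly n z) (genF z t)

lemma hasGenSeries_zero (t : ℂ) : HasGenSeries t 0 := by
  have hseries (n : ℕ) : t ^ n * zpoly n 0 = Pi.single (M := fun _ => ℂ) 0 1 n := by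
    cases n with
    | zero => simp [zpoly]
    | succ n => simp [zpoly_succ_zero]
  simp only [HasGenSeries, hseries]
  have hsum := hasSum_pi_single 0 (1 : ℂ)
  exact ⟨hsum.summable.norm, by simpa [genF] using hsum⟩

lemma HasGenSeries.add_of_isCpathStep {t : ℂ} {z d : GaussianInt} (h : HasGenSeries t z)
    (ht : ‖t‖ < 1) (hstep : IsCpathStep z d) (hd : ‖(d : ℂ)‖ ≤ 1)
    (hG : genF d t = (1 + (1 + d) / 2 * t) / (1 + (1 - d) / 2 * t)) :
    HasGenSeries t (z + d) := by
  have hq : ‖(1 - d) / 2 * t‖ < 1 := norm_mul_lt_one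
    (by simpa [sub_eq_add_neg] using norm_one_add_div_two_le (d := -d) (by simp [hd])) ht
  have hrec (n : ℕ) :
      t ^ (n + 1) * zpoly (n + 1) (z + d) + (1 - d) / 2 * t * (t ^ n * zpoly n (z + d)) =
        t ^ (n + 1) * zpoly (n + 1) z + (1 + d) / 2 * t * (t ^ n * zpoly n z) := by
    rw [zpoly_succ, Zop_add_of_isCpathStep _ hstep]
    ring
  have hS := summable_norm_of_recurrence (u := fun n => t ^ n * zpoly n z)
    (v := fun n => t ^ n * zpoly n (z + d)) hq hrec h.1
  refine ⟨hS, ?_⟩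
  rw [genF_add ht, hG]
  exact hasSum_of_recurrence hq (by simp [zpoly]) hrec hS.of_norm h.2

namespace HasGenSeries

variable {t : ℂ} {z : GaussianInt}

lemma add_one (h : HasGenSeries t z) (ht : ‖t‖ < 1) (hre : 0 ≤ z.re) (him : z.im = 0) :
    HasGenSeries t (z + 1) :=
  h.add_of_isCpathStep ht (isCpathStep_re z (s := 1) rfl him (by simpa using hre)) (by simp)
    (by norm_num [genF])

lemma sub_one (h : HasGenSeries t z) (ht : ‖t‖ < 1) (hre : z.re ≤ 0) (him : z.im = 0) :
    HasGenSeries t (z - 1) := by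
  rw [sub_eq_add_neg]
  exact h.add_of_isCpathStep ht (isCpathStep_re z (s := -1) rfl him (by simpa using hre))
    (by simp) (by norm_num [genF])

lemma add_ii (h : HasGenSeries t z) (ht : ‖t‖ < 1) (him : 0 ≤ z.im) :
    HasGenSeries t (z + ii) :=
  h.add_of_isCpathStep ht (isCpathStep_im z (s := 1) rfl (by simpa using him))
    (by simp [ii, toComplex_def']) (by norm_num [genF, ii, toComplex_def', aPlus, aMinus])

lemma sub_ii (h : HasGenSeries t z) (ht : ‖t‖ < 1) (him : z.im ≤ 0) :
    HasGenSeries t (z - ii) := by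
  rw [sub_eq_add_neg]
  exact h.add_of_isCpathStep ht (isCpathStep_im z (s := -1) rfl (by simpa using him))
    (by simp [ii, toComplex_def'])
    (by norm_num [genF, ii, toComplex_def', aPlus, aMinus, sub_eq_add_neg])

end HasGenSeries

/-- For every `z ∈ Λ` and `|t| < 1` the series `Σ tⁿ z⁽ⁿ⁾(z)` converges
absolutely with sum `G_z(t)`. -/
theorem stmt8 (z : GaussianInt) (t : ℂ) (ht : ‖t‖ < 1) :
    Summable (fun n : ℕ => ‖t ^ n * zpoly n z‖) ∧
    HasSum (fun n : ℕ => t ^ n * zpoly n z) (genF z t) := by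
  have haxis (x : ℤ) : HasGenSeries t ⟨x, 0⟩ := by
    induction x using Int.induction_on with
    | zero => exact hasGenSeries_zero t
    | succ n ih => exact ih.add_one ht (by simp) rfl
    | pred n ih => exact ih.sub_one ht (by simp) rfl
  suffices HasGenSeries t z from this
  obtain ⟨x, y⟩ := z
  induction y using Int.induction_on with
  | zero => exact haxis x
  | succ n ih => convert ih.add_ii ht (by simp) using 1; ext <;> simp [ii]
  | pred n ih => convert ih.sub_ii ht (by simp) using 1; ext <;> simp [ii]

end
end

section
/- For every n ∈ ℕ and every z ∈ Λ, z^{(n)}(conj z) = conj(z^{(n)}(z)); in particular, z^{(n)}(x) is real for every x ∈ ℤ. -/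
open Complex Finset GaussianInt

noncomputable section

/-! Conjugation maps the canonical path to `z` onto the canonical path to `z̄`, and the discrete
integral along it is conjugated termwise, so `Z` preserves the symmetry `f(z̄) = conj (f z)`.
Induction on `n`, starting from the constant `1`, gives it for every `z⁽ⁿ⁾`. -/

open ComplexConjugate

lemma cpath_star (z : GaussianInt) (k : ℕ) : cpath (star z) k = star (cpath z k) := by
  ext <;> simp [cpath]

lemma cpathLen_star (z : GaussianInt) : cpathLen (star z) = cpathLen z := by
  simp [cpathLen]

lemma discInt_star_path {f : GaussianInt → ℂ} (hf : ∀ z, f (star z) = conj (f z))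
    (γ : ℕ → GaussianInt) (n : ℕ) :
    discInt f (fun k => star (γ k)) n = conj (discInt f γ n) := by
  simp only [discInt, map_sum, map_mul, map_div₀, map_add, map_sub, map_ofNat, hf,
    toComplex_star]

lemma Zop_star {f : GaussianInt → ℂ} (hf : ∀ z, f (star z) = conj (f z)) (z : GaussianInt) :
    Zop f (star z) = conj (Zop f z) := by
  have hf0 : f 0 = conj (f 0) := by simpa using hf 0
  have hpath : cpath (star z) = fun k => star (cpath z k) := funext (cpath_star z)
  rw [Zop, Zop, hpath, cpathLen_star, discInt_star_path hf, map_add, map_div₀, map_sub, hf,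
    ← hf0, map_ofNat]

lemma zpoly_star (n : ℕ) (z : GaussianInt) : zpoly n (star z) = conj (zpoly n z) := by
  induction n generalizing z with
  | zero => simp [zpoly]
  | succ n ih =>
    rw [zpoly, Function.iterate_succ_apply']
    exact Zop_star ih z

lemma zpoly_im_eq_zero_on_real_axis (n : ℕ) (x : ℤ) : (zpoly n ⟨x, 0⟩).im = 0 := by
  have hx : star (⟨x, 0⟩ : GaussianInt) = ⟨x, 0⟩ := by simp [Zsqrtd.star_mk]
  rw [← Complex.conj_eq_iff_im, ← zpoly_star, hx]

/-- `z⁽ⁿ⁾(z̄) = conj (z⁽ⁿ⁾(z))`; in particular `z⁽ⁿ⁾` is real on `ℤ`. -/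
theorem stmt11 :
    (∀ (n : ℕ) (z : GaussianInt),
        zpoly n ⟨z.re, -z.im⟩ = (starRingEnd ℂ) (zpoly n z)) ∧
    ∀ (n : ℕ) (x : ℤ), (zpoly n ⟨x, 0⟩).im = 0 :=
  ⟨zpoly_star, zpoly_im_eq_zero_on_real_axis⟩

end
end
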